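/- arXiv:2206.07786 — 3 statements merged into one kernel-verified Lean document; each statement's English description precedes it below -/
import Mathlib

section
/- Let d, K ≥ 1, let Θ ∈ ℝ^{d×K}, and let S = (ΘᵀΘ)^{1/2} denote the positive semidefinite square root of ΘᵀΘ. Then for every symmetric positive definite matrix Ω ∈ ℝ^{K×K}: Tr(Θ Ω⁻¹ Θᵀ) · Tr(Ω) ≥ (Tr(S))². In particular, for every symmetric positive definite Ω with Tr(Ω) = 1, we have Tr(Θ Ω⁻¹ Θᵀ) ≥ (Tr((ΘᵀΘ)^{1/2}))². -/
open Matrix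

theorem Matrix.PosDef.trace_sq_le_trace_mul_inv_mul_transpose_mul_trace {n : Type*} [Fintype n]
    [DecidableEq n] {Ω : Matrix n n ℝ} (hΩ : Ω.PosDef) (A : Matrix n n ℝ) :
    A.trace ^ 2 ≤ (A * Ω⁻¹ * Aᵀ).trace * Ω.trace := by
  -- Cauchy–Schwarz for `⟪X, Y⟫ = tr (Y Ω⁻¹ Xᵀ)`, applied to `Ω` and `A`
  let := Ω⁻¹.toMatrixSeminormedAddCommGroup hΩ.inv.posSemidef
  let := Ω⁻¹.toMatrixInnerProductSpace hΩ.inv.posSemidef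
  have cauchy_schwarz := real_inner_mul_inner_self_le Ω A
  change (A * Ω⁻¹ * Ωᴴ).trace * (A * Ω⁻¹ * Ωᴴ).trace
    ≤ (Ω * Ω⁻¹ * Ωᴴ).trace * (A * Ω⁻¹ * Aᴴ).trace at cauchy_schwarz
  have hΩΩ : Ω⁻¹ * Ωᴴ = 1 := by rw [hΩ.isHermitian.eq, nonsing_inv_mul _ hΩ.det_pos.ne'.isUnit]
  simp only [mul_assoc, hΩΩ, mul_one] at cauchy_schwarz
  rwa [sq, mul_comm _ Ω.trace, mul_assoc, ← conjTranspose_eq_transpose_of_trivial]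

theorem trace_quadratic_lower_bound_general {d K : ℕ}
    (Θ : Matrix (Fin d) (Fin K) ℝ) (S : Matrix (Fin K) (Fin K) ℝ)
    (hS : S.PosSemidef) (hSsq : S * S = Θᵀ * Θ) :
    ∀ Ω : Matrix (Fin K) (Fin K) ℝ, Ω.PosDef →
      ((Θ * Ω⁻¹ * Θᵀ).trace * Ω.trace ≥ S.trace ^ 2 ∧
        (Ω.trace = 1 → (Θ * Ω⁻¹ * Θᵀ).trace ≥ S.trace ^ 2)) := by
  intro Ω hΩ
  have hSΘ : (S * Ω⁻¹ * Sᵀ).trace = (Θ * Ω⁻¹ * Θᵀ).trace := by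
    rw [(isHermitian_iff_isSymm.mp hS.isHermitian).eq, trace_mul_cycle, hSsq, ← trace_mul_cycle]
  have key := hΩ.trace_sq_le_trace_mul_inv_mul_transpose_mul_trace S
  rw [hSΘ] at key
  exact ⟨key, fun h => by simpa only [h, mul_one] using key⟩

/-- For `S` the positive semidefinite square root of `ΘᵀΘ`, and every symmetric positive
definite `Ω`: `Tr(Θ Ω⁻¹ Θᵀ) · Tr(Ω) ≥ (Tr S)²`; in particular if `Tr(Ω) = 1` then
`Tr(Θ Ω⁻¹ Θᵀ) ≥ (Tr((ΘᵀΘ)^{1/2}))²`. -/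
theorem trace_quadratic_lower_bound {d K : ℕ} (hd : 1 ≤ d) (hK : 1 ≤ K)
    (Θ : Matrix (Fin d) (Fin K) ℝ) (S : Matrix (Fin K) (Fin K) ℝ)
    (hS : S.PosSemidef) (hSsq : S * S = Θᵀ * Θ) :
    ∀ Ω : Matrix (Fin K) (Fin K) ℝ, Ω.PosDef →
      ((Θ * Ω⁻¹ * Θᵀ).trace * Ω.trace ≥ S.trace ^ 2 ∧
        (Ω.trace = 1 → (Θ * Ω⁻¹ * Θᵀ).trace ≥ S.trace ^ 2)) :=
  trace_quadratic_lower_bound_general Θ S hS hSsq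
end

section
/- Let d, K ≥ 1 and let Θ ∈ ℝ^{d×K} be such that ΘᵀΘ is positive definite. Let S = (ΘᵀΘ)^{1/2} be the positive definite square root of ΘᵀΘ and define Ω* = S / Tr(S). Then: (i) Ω* is symmetric positive definite with Tr(Ω*) = 1; (ii) Tr(Θ (Ω*)⁻¹ Θᵀ) = (Tr(S))²; and therefore (iii) Ω* minimizes Ω ↦ Tr(Θ Ω⁻¹ Θᵀ) over the set of symmetric positive definite K×K matrices Ω with Tr(Ω) = 1, i.e., Tr(Θ Ω⁻¹ Θᵀ) ≥ Tr(Θ (Ω*)⁻¹ Θᵀ) for every symmetric positive definite Ω with Tr(Ω) = 1. -/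
/-!
Writing `Θᵀ Θ = S²` turns the objective into `Tr(S Ω⁻¹ S)`. Since `Ω⁻¹` is positive definite,
`Tr((S - t Ω) Ω⁻¹ (S - t Ω)) ≥ 0` for every real `t`; expanding and taking `t = Tr S` gives
`Tr(S Ω⁻¹ S) ≥ 2 (Tr S)² - (Tr S)² Tr Ω = (Tr S)²` when `Tr Ω = 1`, and `Ω* = S / Tr S` attains this.
-/

open Matrix

theorem Matrix.trace_mul_mul_transpose_eq_of_transpose_mul_self_eq {l m n R : Type*}
    [Fintype l] [Fintype m] [Fintype n] [CommRing R] {Θ : Matrix m n R} {Φ : Matrix l n R}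
    (h : Φᵀ * Φ = Θᵀ * Θ) (M : Matrix n n R) :
    (Θ * M * Θᵀ).trace = (Φ * M * Φᵀ).trace := by
  rw [trace_mul_cycle, ← h, ← trace_mul_cycle]

theorem Matrix.PosDef.two_mul_trace_sub_le_trace_mul_inv_mul_transpose {n : Type*} [Fintype n]
    [DecidableEq n] {Ω : Matrix n n ℝ} (hΩ : Ω.PosDef) (A : Matrix n n ℝ) (t : ℝ) :
    2 * t * A.trace - t ^ 2 * Ω.trace ≤ (A * Ω⁻¹ * Aᵀ).trace := by
  have hsq : 0 ≤ ((A - t • Ω) * Ω⁻¹ * (A - t • Ω)ᵀ).trace :=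
    (hΩ.inv.posSemidef.mul_mul_conjTranspose_same (A - t • Ω)).trace_nonneg
  have hdet : IsUnit Ω.det := (isUnit_iff_isUnit_det Ω).mp hΩ.isUnit
  have hsymm : Ωᵀ = Ω := hΩ.isHermitian
  have hexpand : (A - t • Ω) * Ω⁻¹ * (A - t • Ω)ᵀ =
      A * Ω⁻¹ * Aᵀ - t • A - t • Aᵀ + t ^ 2 • Ω := by
    simp only [transpose_sub, transpose_smul, hsymm, sub_mul, mul_sub, Matrix.smul_mul,
      Matrix.mul_smul, Matrix.mul_assoc, mul_nonsing_inv_cancel_left _ _ hdet,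
      nonsing_inv_mul _ hdet, Matrix.mul_one]
    module
  rw [hexpand] at hsq
  simp only [trace_add, trace_sub, trace_smul, trace_transpose, smul_eq_mul] at hsq
  linarith

theorem optimal_covariance_update_general {d K : ℕ} (hK : 1 ≤ K)
    (Θ : Matrix (Fin d) (Fin K) ℝ) (hΘ : (Θᵀ * Θ).PosDef)
    (S : Matrix (Fin K) (Fin K) ℝ) (hS : S.PosSemidef) (hSsq : S * S = Θᵀ * Θ) :
    ((S.trace)⁻¹ • S).IsSymm ∧ ((S.trace)⁻¹ • S).PosDef ∧ ((S.trace)⁻¹ • S).trace = 1 ∧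
    (Θ * ((S.trace)⁻¹ • S)⁻¹ * Θᵀ).trace = S.trace ^ 2 ∧
    ∀ Ω : Matrix (Fin K) (Fin K) ℝ, Ω.PosDef → Ω.trace = 1 →
      (Θ * Ω⁻¹ * Θᵀ).trace ≥ (Θ * ((S.trace)⁻¹ • S)⁻¹ * Θᵀ).trace := by
  have : Nonempty (Fin K) := ⟨⟨0, hK⟩⟩
  have hSpd : S.PosDef :=
    hS.posDef_iff_isUnit.mpr (isUnit_of_mul_isUnit_left (hSsq ▸ hΘ.isUnit))
  have hSsymm : S.IsSymm := hSpd.isHermitian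
  have htr : 0 < S.trace := hSpd.trace_pos
  have hgram : Sᵀ * S = Θᵀ * Θ := by rw [hSsymm.eq, hSsq]
  have hdet : IsUnit S.det := (isUnit_iff_isUnit_det S).mp hSpd.isUnit
  have hinv : ((S.trace)⁻¹ • S)⁻¹ = S.trace • S⁻¹ :=
    inv_eq_left_inv (by simp [smul_smul, htr.ne', nonsing_inv_mul _ hdet])
  have hval : (Θ * ((S.trace)⁻¹ • S)⁻¹ * Θᵀ).trace = S.trace ^ 2 := by
    rw [trace_mul_mul_transpose_eq_of_transpose_mul_self_eq hgram, hinv, hSsymm.eq,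
      Matrix.mul_smul, Matrix.smul_mul, mul_nonsing_inv _ hdet, Matrix.one_mul, trace_smul,
      smul_eq_mul, sq]
  refine ⟨hSsymm.smul _, hSpd.smul (inv_pos.mpr htr), ?_, hval, fun Ω hΩ hΩtr => ?_⟩
  · rw [trace_smul, smul_eq_mul, inv_mul_cancel₀ htr.ne']
  · have hbound := hΩ.two_mul_trace_sub_le_trace_mul_inv_mul_transpose S S.trace
    rw [hΩtr, ← trace_mul_mul_transpose_eq_of_transpose_mul_self_eq hgram] at hbound
    rw [hval]
    linarith

/-- If `ΘᵀΘ` is positive definite with positive definite square root `S`, then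
`Ω* = S / Tr(S)` is symmetric positive definite with unit trace, satisfies
`Tr(Θ (Ω*)⁻¹ Θᵀ) = (Tr S)²`, and minimizes `Ω ↦ Tr(Θ Ω⁻¹ Θᵀ)` over symmetric positive
definite matrices of unit trace. -/
theorem optimal_covariance_update {d K : ℕ} (hd : 1 ≤ d) (hK : 1 ≤ K)
    (Θ : Matrix (Fin d) (Fin K) ℝ) (hΘ : (Θᵀ * Θ).PosDef)
    (S : Matrix (Fin K) (Fin K) ℝ) (hS : S.PosSemidef) (hSsq : S * S = Θᵀ * Θ) :
    ((S.trace)⁻¹ • S).IsSymm ∧ ((S.trace)⁻¹ • S).PosDef ∧ ((S.trace)⁻¹ • S).trace = 1 ∧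
    (Θ * ((S.trace)⁻¹ • S)⁻¹ * Θᵀ).trace = S.trace ^ 2 ∧
    ∀ Ω : Matrix (Fin K) (Fin K) ℝ, Ω.PosDef → Ω.trace = 1 →
      (Θ * Ω⁻¹ * Θᵀ).trace ≥ (Θ * ((S.trace)⁻¹ • S)⁻¹ * Θᵀ).trace :=
  optimal_covariance_update_general hK Θ hΘ S hS hSsq
end

section
/- Let d, N ≥ 1, let X ∈ ℝ^{d×N}, μ ∈ ℝ^d, let T ∈ ℝ^{d×d} be symmetric positive definite, and let σ > 0. Then for every y ∈ ℝ^N, the marginal likelihood integral of the Gaussian linear model with Gaussian prior satisfies ∫_{ℝ^d} N(y; Xᵀθ, σ² I_N) · N(θ; μ, T) dθ = N(y; Xᵀμ, Xᵀ T X + σ² I_N), where Xᵀ T X + σ² I_N is symmetric positive definite. -/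
/-!
Completing the square in `θ` factors the joint density `N(y; Aθ, R) N(θ; μ, T)` as the marginal
`N(y; Aμ, A T Aᵀ + R)` times the posterior `N(θ; m, Q⁻¹)`, where `Q = T⁻¹ + Aᵀ R⁻¹ A`: the
Woodbury identity matches the quadratic forms and the matrix determinant lemma matches the
normalizing constants. Integrating out `θ` leaves the marginal, because a Gaussian density with
positive definite covariance `S` integrates to `1`: substituting `x = L v + m` with `L Lᵀ = S`
turns it into a product of standard normal densities.
-/

open Matrix MeasureTheory

/-- The multivariate Gaussian density `N(x; μ, S)` with mean `μ` and covariance `S`. -/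
noncomputable def gaussianDensity {ι : Type*} [Fintype ι] [DecidableEq ι]
    (μ : ι → ℝ) (S : Matrix ι ι ℝ) (x : ι → ℝ) : ℝ :=
  (2 * Real.pi) ^ (-(Fintype.card ι : ℝ) / 2) * S.det ^ (-(1 : ℝ) / 2) *
    Real.exp (-(1 / 2) * ((x - μ) ⬝ᵥ (S⁻¹ *ᵥ (x - μ))))

open ProbabilityTheory

section Algebra

variable {K ι κ : Type*} [CommRing K] [Fintype ι] [Fintype κ]

lemma mulVec_dotProduct_mulVec_mulVec (A : Matrix κ ι K) (M : Matrix κ κ K) (x v : ι → K) :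
    (A *ᵥ x) ⬝ᵥ (M *ᵥ (A *ᵥ v)) = x ⬝ᵥ ((Aᵀ * M * A) *ᵥ v) := by
  rw [← mulVec_mulVec, ← mulVec_mulVec, dotProduct_transpose_mulVec, dotProduct_comm]

lemma sub_mulVec_dotProduct_mulVec_sub_add (A : Matrix κ ι K) {P : Matrix κ κ K} (hP : P.IsSymm)
    (M : Matrix ι ι K) (w : κ → K) (z : ι → K) :
    (w - A *ᵥ z) ⬝ᵥ (P *ᵥ (w - A *ᵥ z)) + z ⬝ᵥ (M *ᵥ z) =
      w ⬝ᵥ (P *ᵥ w) - 2 * ((Aᵀ *ᵥ (P *ᵥ w)) ⬝ᵥ z) + z ⬝ᵥ ((M + Aᵀ * P * A) *ᵥ z) := by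
  have hcross : (A *ᵥ z) ⬝ᵥ (P *ᵥ w) = (Aᵀ *ᵥ (P *ᵥ w)) ⬝ᵥ z := by
    rw [dotProduct_comm _ z, dotProduct_transpose_mulVec, dotProduct_comm]
  have hcross' : w ⬝ᵥ (P *ᵥ (A *ᵥ z)) = (Aᵀ *ᵥ (P *ᵥ w)) ⬝ᵥ z := by
    rw [← hcross, ← hP.eq, dotProduct_transpose_mulVec, hP.eq]
  rw [mulVec_sub, sub_dotProduct, dotProduct_sub, dotProduct_sub, hcross, hcross',
    mulVec_dotProduct_mulVec_mulVec, add_mulVec, dotProduct_add]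
  ring

variable [DecidableEq ι] [DecidableEq κ]

lemma sub_inv_mulVec_dotProduct_mulVec {Q : Matrix ι ι K} (hQ : Q.IsSymm) (hQu : IsUnit Q.det)
    (b z : ι → K) :
    (z - Q⁻¹ *ᵥ b) ⬝ᵥ (Q *ᵥ (z - Q⁻¹ *ᵥ b)) =
      z ⬝ᵥ (Q *ᵥ z) - 2 * (b ⬝ᵥ z) + b ⬝ᵥ (Q⁻¹ *ᵥ b) := by
  have hQQ : Q *ᵥ (Q⁻¹ *ᵥ b) = b := by rw [mulVec_mulVec, mul_nonsing_inv _ hQu, one_mulVec]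
  have hsymm : (Q⁻¹ *ᵥ b) ⬝ᵥ (Q *ᵥ z) = b ⬝ᵥ z := by
    rw [← hQ.eq, dotProduct_transpose_mulVec, hQ.eq, hQQ, dotProduct_comm]
  rw [mulVec_sub, hQQ, sub_dotProduct, dotProduct_sub, dotProduct_sub, hsymm, dotProduct_comm z b,
    dotProduct_comm (Q⁻¹ *ᵥ b) b]
  ring

lemma dotProduct_inv_mul_mul_transpose_add_mulVec {A : Matrix κ ι K} {T : Matrix ι ι K}
    {R : Matrix κ κ K} (hR : R.IsSymm) (hRu : IsUnit R.det) (hTu : IsUnit T.det)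
    (hQu : IsUnit (T⁻¹ + Aᵀ * R⁻¹ * A).det) (w : κ → K) :
    w ⬝ᵥ ((A * T * Aᵀ + R)⁻¹ *ᵥ w) = w ⬝ᵥ (R⁻¹ *ᵥ w) -
      (Aᵀ *ᵥ (R⁻¹ *ᵥ w)) ⬝ᵥ ((T⁻¹ + Aᵀ * R⁻¹ * A)⁻¹ *ᵥ (Aᵀ *ᵥ (R⁻¹ *ᵥ w))) := by
  rw [add_comm, add_mul_mul_inv_eq_sub _ _ _ _ ((isUnit_iff_isUnit_det R).2 hRu)
    ((isUnit_iff_isUnit_det T).2 hTu) ((isUnit_iff_isUnit_det _).2 hQu), sub_mulVec,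
    dotProduct_sub, mulVec_mulVec w Aᵀ R⁻¹, mulVec_dotProduct_mulVec_mulVec, transpose_mul,
    transpose_transpose, hR.inv.eq]
  simp only [Matrix.mul_assoc]

lemma det_mul_mul_transpose_add {A : Matrix κ ι K} {T : Matrix ι ι K} {R : Matrix κ κ K}
    (hRu : IsUnit R.det) (hTu : IsUnit T.det) :
    (A * T * Aᵀ + R).det = R.det * T.det * (T⁻¹ + Aᵀ * R⁻¹ * A).det := by
  rw [add_comm, det_add_mul _ _ hRu, mul_assoc, ← det_mul, mul_add, mul_nonsing_inv _ hTu,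
    ← Matrix.mul_assoc _ A T, det_one_add_mul_comm]

end Algebra

variable {ι κ : Type*} [Fintype ι] [DecidableEq ι] [Fintype κ] [DecidableEq κ]

section Normalization

lemma gaussianDensity_zero_one (v : ι → ℝ) :
    gaussianDensity 0 1 v = ∏ i, gaussianPDFReal 0 1 (v i) := by
  have h2π : (2 * Real.pi) ^ (-(Fintype.card ι : ℝ) / 2) =
      (√(2 * Real.pi))⁻¹ ^ Fintype.card ι := by
    rw [Real.sqrt_eq_rpow, ← Real.rpow_neg (by positivity), ← Real.rpow_natCast,
      ← Real.rpow_mul (by positivity)]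
    ring_nf
  simp only [gaussianDensity, gaussianPDFReal, Finset.prod_mul_distrib, ← Real.exp_sum,
    Finset.prod_const, det_one, inv_one, one_mulVec, sub_zero, dotProduct, Finset.card_univ,
    Real.one_rpow, mul_one, h2π, NNReal.coe_one, Finset.mul_sum]
  congr 3 with i
  ring

lemma integral_gaussianDensity_zero_one : ∫ v, gaussianDensity (0 : ι → ℝ) 1 v = 1 := by
  simp_rw [gaussianDensity_zero_one]
  rw [integral_fintype_prod_volume_eq_prod]
  simp [integral_gaussianPDFReal_eq_one]

lemma integral_comp_mulVec {E : Type*} [NormedAddCommGroup E] [NormedSpace ℝ E]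
    {L : Matrix ι ι ℝ} (hL : L.det ≠ 0) (f : (ι → ℝ) → E) :
    ∫ v, f (L *ᵥ v) = |L.det|⁻¹ • ∫ x, f x := by
  have hdet : LinearMap.det (toLin' L) ≠ 0 := by rwa [LinearMap.det_toLin']
  have hemb : MeasurableEmbedding (toLin' L) :=
    (LinearMap.isClosedEmbedding_of_injective (LinearMap.ker_eq_bot.2
      (mulVec_injective_iff_isUnit.2 ((isUnit_iff_isUnit_det L).2 hL.isUnit)))).measurableEmbedding
  rw [show (fun v => f (L *ᵥ v)) = fun v => f (toLin' L v) from rfl, ← hemb.integral_map,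
    Real.map_linearMap_volume_pi_eq_smul_volume_pi hdet, integral_smul_measure,
    LinearMap.det_toLin', ENNReal.toReal_ofReal (abs_nonneg _), abs_inv]

lemma gaussianDensity_mulVec_add {S L : Matrix ι ι ℝ} (hLS : L * Lᵀ = S) (hL : L.det ≠ 0)
    (m v : ι → ℝ) : gaussianDensity m S (L *ᵥ v + m) = |L.det|⁻¹ * gaussianDensity 0 1 v := by
  have hLu : IsUnit L := (isUnit_iff_isUnit_det L).2 hL.isUnit
  have hLSL : Lᵀ * S⁻¹ * L = 1 := by
    rw [← hLS, Matrix.mul_inv_rev, ← Matrix.mul_assoc,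
      mul_nonsing_inv _ ((isUnit_iff_isUnit_det _).1 ((isUnit_transpose L).2 hLu)), Matrix.one_mul,
      nonsing_inv_mul _ ((isUnit_iff_isUnit_det L).1 hLu)]
  have hdet : S.det ^ (-(1 : ℝ) / 2) = |L.det|⁻¹ := by
    rw [← hLS, det_mul, det_transpose, ← sq, neg_div, Real.rpow_neg (sq_nonneg _),
      ← Real.sqrt_eq_rpow, Real.sqrt_sq_eq_abs]
  simp only [gaussianDensity, add_sub_cancel_right, sub_zero, mulVec_dotProduct_mulVec_mulVec,
    hLSL, hdet, det_one, inv_one, Real.one_rpow]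
  ring

open scoped MatrixOrder in
lemma Matrix.PosDef.exists_mul_transpose_eq {S : Matrix ι ι ℝ} (hS : S.PosDef) :
    ∃ L : Matrix ι ι ℝ, L * Lᵀ = S ∧ L.det ≠ 0 := by
  have hsymm : (CFC.sqrt S)ᵀ = CFC.sqrt S := by
    simpa [conjTranspose_eq_transpose_of_trivial] using
      (CFC.sqrt_nonneg S).posSemidef.isHermitian.eq
  refine ⟨CFC.sqrt S, by rw [hsymm, CFC.sqrt_mul_sqrt_self S hS.posSemidef.nonneg], fun h => ?_⟩
  have := hS.det_pos
  rw [← CFC.sqrt_mul_sqrt_self S hS.posSemidef.nonneg, det_mul, h, zero_mul] at this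
  exact lt_irrefl 0 this

lemma integral_gaussianDensity (m : ι → ℝ) {S : Matrix ι ι ℝ} (hS : S.PosDef) :
    ∫ x, gaussianDensity m S x = 1 := by
  obtain ⟨L, hLS, hL⟩ := hS.exists_mul_transpose_eq
  have hL' : 0 < |L.det| := abs_pos.2 hL
  calc ∫ x, gaussianDensity m S x = ∫ x, gaussianDensity m S (x + m) :=
        (integral_add_right_eq_self _ m).symm
    _ = |L.det| * ∫ v, gaussianDensity m S (L *ᵥ v + m) := by
        rw [integral_comp_mulVec hL fun x => gaussianDensity m S (x + m), smul_eq_mul]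
        field_simp
    _ = 1 := by
        simp_rw [gaussianDensity_mulVec_add hLS hL]
        rw [integral_const_mul, integral_gaussianDensity_zero_one]
        field_simp

end Normalization

section LinearGaussianModel

variable (A : Matrix κ ι ℝ) (R : Matrix κ κ ℝ) (T : Matrix ι ι ℝ)

/-- Posterior precision of `θ` in the model `y ∣ θ ∼ N(A θ, R)`, `θ ∼ N(μ, T)`. -/
noncomputable def posteriorPrecision : Matrix ι ι ℝ := T⁻¹ + Aᵀ * R⁻¹ * A

noncomputable def posteriorMean (μ : ι → ℝ) (y : κ → ℝ) : ι → ℝ :=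
  μ + (posteriorPrecision A R T)⁻¹ *ᵥ (Aᵀ *ᵥ (R⁻¹ *ᵥ (y - A *ᵥ μ)))

variable {R T}

lemma posDef_posteriorPrecision (hR : R.PosDef) (hT : T.PosDef) :
    (posteriorPrecision A R T).PosDef := by
  rw [posteriorPrecision]
  simpa [conjTranspose_eq_transpose_of_trivial] using
    hT.inv.add_posSemidef (hR.inv.posSemidef.conjTranspose_mul_mul_same A)

lemma quadForm_joint_eq_marginal_add_posterior (hR : R.PosDef) (hT : T.PosDef)
    (μ θ : ι → ℝ) (y : κ → ℝ) :
    (y - A *ᵥ θ) ⬝ᵥ (R⁻¹ *ᵥ (y - A *ᵥ θ)) + (θ - μ) ⬝ᵥ (T⁻¹ *ᵥ (θ - μ)) =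
      (y - A *ᵥ μ) ⬝ᵥ ((A * T * Aᵀ + R)⁻¹ *ᵥ (y - A *ᵥ μ)) +
        (θ - posteriorMean A R T μ y) ⬝ᵥ
          (posteriorPrecision A R T *ᵥ (θ - posteriorMean A R T μ y)) := by
  have hQ := posDef_posteriorPrecision A hR hT
  have hRs : R.IsSymm := isHermitian_iff_isSymm.1 hR.isHermitian
  have hres : y - A *ᵥ θ = (y - A *ᵥ μ) - A *ᵥ (θ - μ) := by rw [mulVec_sub]; abel
  have hpost : θ - posteriorMean A R T μ y =
      (θ - μ) - (posteriorPrecision A R T)⁻¹ *ᵥ (Aᵀ *ᵥ (R⁻¹ *ᵥ (y - A *ᵥ μ))) := by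
    rw [posteriorMean]; abel
  rw [hres, hpost, sub_mulVec_dotProduct_mulVec_sub_add A hRs.inv,
    sub_inv_mulVec_dotProduct_mulVec (isHermitian_iff_isSymm.1 hQ.isHermitian)
      hQ.det_pos.ne'.isUnit,
    dotProduct_inv_mul_mul_transpose_add_mulVec hRs hR.det_pos.ne'.isUnit hT.det_pos.ne'.isUnit
      hQ.det_pos.ne'.isUnit, posteriorPrecision]
  ring

lemma gaussianDensity_mulVec_mul_gaussianDensity (hR : R.PosDef) (hT : T.PosDef)
    (μ θ : ι → ℝ) (y : κ → ℝ) :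
    gaussianDensity (A *ᵥ θ) R y * gaussianDensity μ T θ =
      gaussianDensity (A *ᵥ μ) (A * T * Aᵀ + R) y *
        gaussianDensity (posteriorMean A R T μ y) (posteriorPrecision A R T)⁻¹ θ := by
  have hQ := posDef_posteriorPrecision A hR hT
  have hdet : R.det ^ (-(1 : ℝ) / 2) * T.det ^ (-(1 : ℝ) / 2) =
      (A * T * Aᵀ + R).det ^ (-(1 : ℝ) / 2) *
        (posteriorPrecision A R T)⁻¹.det ^ (-(1 : ℝ) / 2) := by
    rw [det_mul_mul_transpose_add hR.det_pos.ne'.isUnit hT.det_pos.ne'.isUnit,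
      ← posteriorPrecision,
      det_nonsing_inv, Ring.inverse_eq_inv', Real.inv_rpow hQ.det_pos.le,
      Real.mul_rpow (mul_pos hR.det_pos hT.det_pos).le hQ.det_pos.le,
      Real.mul_rpow hR.det_pos.le hT.det_pos.le,
      mul_inv_cancel_right₀ (Real.rpow_pos_of_pos hQ.det_pos _).ne']
  have regroup : ∀ c₁ c₂ d₁ d₂ d₃ d₄ q₁ q₂ q₃ q₄ : ℝ, d₁ * d₂ = d₃ * d₄ → q₁ + q₂ = q₃ + q₄ →
      c₁ * d₁ * Real.exp (-(1 / 2) * q₁) * (c₂ * d₂ * Real.exp (-(1 / 2) * q₂)) =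
        c₁ * d₃ * Real.exp (-(1 / 2) * q₃) * (c₂ * d₄ * Real.exp (-(1 / 2) * q₄)) := by
    intro c₁ c₂ d₁ d₂ d₃ d₄ q₁ q₂ q₃ q₄ hd hq
    have he : Real.exp (-(1 / 2) * q₁) * Real.exp (-(1 / 2) * q₂) =
        Real.exp (-(1 / 2) * q₃) * Real.exp (-(1 / 2) * q₄) := by
      rw [← Real.exp_add, ← Real.exp_add, ← mul_add, ← mul_add, hq]
    linear_combination (c₁ * c₂ * Real.exp (-(1 / 2) * q₁) * Real.exp (-(1 / 2) * q₂)) * hd +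
      (c₁ * c₂ * d₃ * d₄) * he
  simp only [gaussianDensity, nonsing_inv_nonsing_inv _ hQ.det_pos.ne'.isUnit]
  exact regroup _ _ _ _ _ _ _ _ _ _ hdet
    (quadForm_joint_eq_marginal_add_posterior A hR hT μ θ y)

theorem integral_gaussianDensity_mulVec_mul_gaussianDensity (hR : R.PosDef) (hT : T.PosDef)
    (μ : ι → ℝ) (y : κ → ℝ) :
    ∫ θ, gaussianDensity (A *ᵥ θ) R y * gaussianDensity μ T θ =
      gaussianDensity (A *ᵥ μ) (A * T * Aᵀ + R) y := by
  simp_rw [gaussianDensity_mulVec_mul_gaussianDensity A hR hT μ _ y]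
  rw [integral_const_mul, integral_gaussianDensity _ (posDef_posteriorPrecision A hR hT).inv,
    mul_one]

end LinearGaussianModel

theorem gaussian_marginal_likelihood_general {d N : ℕ}
    (X : Matrix (Fin d) (Fin N) ℝ) (μ : Fin d → ℝ)
    (T : Matrix (Fin d) (Fin d) ℝ) (hT : T.PosDef)
    (σ : ℝ) (hσ : 0 < σ) (y : Fin N → ℝ) :
    (Xᵀ * T * X + σ ^ 2 • (1 : Matrix (Fin N) (Fin N) ℝ)).IsSymm ∧
    (Xᵀ * T * X + σ ^ 2 • (1 : Matrix (Fin N) (Fin N) ℝ)).PosDef ∧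
    ∫ θ : Fin d → ℝ,
        gaussianDensity (Xᵀ *ᵥ θ) (σ ^ 2 • (1 : Matrix (Fin N) (Fin N) ℝ)) y *
          gaussianDensity μ T θ =
      gaussianDensity (Xᵀ *ᵥ μ) (Xᵀ * T * X + σ ^ 2 • (1 : Matrix (Fin N) (Fin N) ℝ)) y := by
  have hnoise : (σ ^ 2 • (1 : Matrix (Fin N) (Fin N) ℝ)).PosDef := PosDef.one.smul (by positivity)
  have hS : (Xᵀ * T * X + σ ^ 2 • (1 : Matrix (Fin N) (Fin N) ℝ)).PosDef := by
    simpa [conjTranspose_eq_transpose_of_trivial] using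
      PosDef.posSemidef_add (hT.posSemidef.conjTranspose_mul_mul_same X) hnoise
  refine ⟨isHermitian_iff_isSymm.1 hS.isHermitian, hS, ?_⟩
  simpa using integral_gaussianDensity_mulVec_mul_gaussianDensity Xᵀ hnoise hT μ y

/-- Marginal likelihood of a Gaussian linear model with a Gaussian prior:
`∫ N(y; Xᵀθ, σ²I) N(θ; μ, T) dθ = N(y; Xᵀμ, Xᵀ T X + σ² I)`, and the marginal covariance
`Xᵀ T X + σ² I` is symmetric positive definite. -/
theorem gaussian_marginal_likelihood {d N : ℕ} (hd : 1 ≤ d) (hN : 1 ≤ N)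
    (X : Matrix (Fin d) (Fin N) ℝ) (μ : Fin d → ℝ)
    (T : Matrix (Fin d) (Fin d) ℝ) (hT : T.PosDef) (hTsymm : T.IsSymm)
    (σ : ℝ) (hσ : 0 < σ) (y : Fin N → ℝ) :
    (Xᵀ * T * X + σ ^ 2 • (1 : Matrix (Fin N) (Fin N) ℝ)).IsSymm ∧
    (Xᵀ * T * X + σ ^ 2 • (1 : Matrix (Fin N) (Fin N) ℝ)).PosDef ∧
    ∫ θ : Fin d → ℝ,
        gaussianDensity (Xᵀ *ᵥ θ) (σ ^ 2 • (1 : Matrix (Fin N) (Fin N) ℝ)) y *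
          gaussianDensity μ T θ =
      gaussianDensity (Xᵀ *ᵥ μ) (Xᵀ * T * X + σ ^ 2 • (1 : Matrix (Fin N) (Fin N) ℝ)) y :=
  gaussian_marginal_likelihood_general X μ T hT σ hσ y
end
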